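/- If x and y are two binary configurations belonging to the same attractor of a Boolean network f under the most permissive semantics, then every configuration of the smallest hypercube containing both x and y also belongs to that attractor; in particular, every most permissive attractor is the set of configurations of a hypercube. -/

import Mathlib

inductive PState : Type
  | zero | up | down | one
deriving DecidableEq

def PState.ofBool : Bool → PState
  | false => .zero
  | true  => .one

def PState.isBool (p : PState) : Prop := p = .zero ∨ p = .one

abbrev BN (n : ℕ) := (Fin n → Bool) → Fin n → Bool

def gamma {n : ℕ} (x : Fin n → PState) : Set (Fin n → Bool) :=
  {b | ∀ i (v : Bool), x i = PState.ofBool v → b i = v}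

def mpStep {n : ℕ} (f : BN n) (x y : Fin n → PState) : Prop :=
  ∃ i : Fin n, x i ≠ y i ∧ (∀ j, j ≠ i → x j = y j) ∧
    ((y i = .up ∧ x i ≠ .one ∧ ∃ z ∈ gamma x, f z i = true) ∨
     (y i = .one ∧ x i = .up) ∨
     (y i = .down ∧ x i ≠ .zero ∧ ∃ z ∈ gamma x, f z i = false) ∨
     (y i = .zero ∧ x i = .down))

def mpReachP {n : ℕ} (f : BN n) : (Fin n → PState) → (Fin n → PState) → Prop :=
  Relation.ReflTransGen (mpStep f)

def embed {n : ℕ} (x : Fin n → Bool) : Fin n → PState := fun i => PState.ofBool (x i)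

def mpReach {n : ℕ} (f : BN n) (x : Fin n → Bool) : Set (Fin n → Bool) :=
  {y | mpReachP f (embed x) (embed y)}

def cubeSet {n : ℕ} (h : Fin n → Option Bool) : Set (Fin n → Bool) :=
  {z | ∀ i b, h i = some b → z i = b}

def smaller {n : ℕ} (h h' : Fin n → Option Bool) : Prop :=
  ∀ i b, h' i = some b → h i = some b

def kClosed {n : ℕ} (f : BN n) (K : Finset (Fin n)) (h : Fin n → Option Bool) : Prop :=
  ∀ z ∈ cubeSet h, ∀ i ∈ K, h i = none ∨ h i = some (f z i)

def closedBy {n : ℕ} (f : BN n) (h : Fin n → Option Bool) : Prop :=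
  ∀ z ∈ cubeSet h, f z ∈ cubeSet h

def smallestClosed {n : ℕ} (f : BN n) (x : Fin n → Bool) (h : Fin n → Option Bool) : Prop :=
  x ∈ cubeSet h ∧ closedBy f h ∧
    ∀ h', x ∈ cubeSet h' → closedBy f h' → smaller h h'

def minClosed {n : ℕ} (f : BN n) (h : Fin n → Option Bool) : Prop :=
  closedBy f h ∧ ∀ h', closedBy f h' → smaller h' h → h' = h

def faStep {n : ℕ} (f : BN n) (x y : Fin n → Bool) : Prop :=
  ∃ i : Fin n, x i ≠ y i ∧ (∀ j, j ≠ i → x j = y j) ∧ y i = f x i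

def aStep {n : ℕ} (f : BN n) (x y : Fin n → Bool) : Prop :=
  x ≠ y ∧ ∀ i, x i ≠ y i → y i = f x i

def mnStep {n m : ℕ} (F : (Fin n → Fin (m+1)) → Fin n → ℤ)
    (x y : Fin n → Fin (m+1)) : Prop :=
  x ≠ y ∧ ∀ i, x i ≠ y i → ((y i : ℤ) = (x i : ℤ) + F x i)

def beta {n m : ℕ} (x : Fin n → Fin (m+1)) : Set (Fin n → Bool) :=
  {b | ∀ i, ((x i : ℕ) = 0 → b i = false) ∧ ((x i : ℕ) = m → b i = true)}

def refines {n m : ℕ} (F : (Fin n → Fin (m+1)) → Fin n → ℤ) (f : BN n) : Prop :=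
  ∀ x i, (F x i > 0 → ∃ b ∈ beta x, f b i = true) ∧
         (F x i < 0 → ∃ b ∈ beta x, f b i = false)

def alpha {n m : ℕ} (x : Fin n → Fin (m+1)) : Set (Fin n → PState) :=
  {p | ∀ i, ((x i : ℕ) = 0 ↔ p i = .zero) ∧ ((x i : ℕ) = m ↔ p i = .one)}

def bdStep {n : ℕ} (f : BN n) (L : Finset (Fin n)) (a b : Fin n → PState) : Prop :=
  mpStep f a b ∧ ∃ j, a j ≠ b j ∧ j ∉ L ∧ (a j).isBool ∧ ¬ (b j).isBool

def exhaustive {n : ℕ} (f : BN n) (x : Fin n → Bool) (L : Finset (Fin n))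
    (zhat : Fin n → PState) : Prop :=
  Relation.ReflTransGen (bdStep f L) (embed x) zhat ∧ ∀ z', ¬ bdStep f L zhat z'


section Aux

open Classical

variable {n : ℕ}

lemma ofBool_inj {a b : Bool} (h : PState.ofBool a = PState.ofBool b) : a = b := by
  cases a <;> cases b <;> simp_all [PState.ofBool]

lemma ofBool_ne_up (b : Bool) : PState.ofBool b ≠ PState.up := by
  cases b <;> simp [PState.ofBool]

lemma ofBool_ne_down (b : Bool) : PState.ofBool b ≠ PState.down := by
  cases b <;> simp [PState.ofBool]

lemma ofBool_ne_trans {b : Bool} {p : PState} (h : p = PState.up ∨ p = PState.down) :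
    PState.ofBool b ≠ p := by
  rcases h with h | h <;> rw [h]
  · exact ofBool_ne_up b
  · exact ofBool_ne_down b

lemma bool_ne_iff {a b : Bool} : a ≠ b ↔ a = !b := by cases a <;> cases b <;> simp

lemma invariant_step (f : BN n) (h : Fin n → Option Bool) (hcl : closedBy f h)
    (u v : Fin n → PState) (hu : ∀ i b, h i = some b → u i = PState.ofBool b)
    (hstep : mpStep f u v) : ∀ i b, h i = some b → v i = PState.ofBool b := by
  obtain ⟨j, hne, hoth, hcases⟩ := hstep
  intro i b hib
  by_cases hij : i = j
  · subst hij
    exfalso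
    have hui := hu i b hib
    have hwc : ∀ w ∈ gamma u, w ∈ cubeSet h := by
      intro w hw k c hkc
      exact hw k c (hu k c hkc)
    rcases hcases with ⟨hvj, hno, w, hw, hfw⟩ | ⟨hvj, hup⟩ | ⟨hvj, hnz, w, hw, hfw⟩ | ⟨hvj, hdn⟩
    · have hb : b = false := by
        cases b
        · rfl
        · exact absurd hui hno
      have hfc : f w i = b := hcl w (hwc w hw) i b hib
      rw [hfw, hb] at hfc
      exact Bool.noConfusion hfc
    · rw [hui] at hup
      exact ofBool_ne_up b hup
    · have hb : b = true := by
        cases b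
        · exact absurd hui hnz
        · rfl
      have hfc : f w i = b := hcl w (hwc w hw) i b hib
      rw [hfw, hb] at hfc
      exact Bool.noConfusion hfc
    · rw [hui] at hdn
      exact ofBool_ne_down b hdn
  · rw [← hoth i hij]
    exact hu i b hib

lemma invariant (f : BN n) (h : Fin n → Option Bool) (x0 : Fin n → Bool)
    (hx0 : x0 ∈ cubeSet h) (hcl : closedBy f h) :
    ∀ u, mpReachP f (embed x0) u → ∀ i b, h i = some b → u i = PState.ofBool b := by
  intro u hu
  induction hu with
  | refl => exact fun i b hib => congrArg PState.ofBool (hx0 i b hib)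
  | tail _ hstep ih => exact invariant_step f h hcl _ _ ih hstep

noncomputable def Hh (f : BN n) (x : Fin n → Bool) : Fin n → Option Bool :=
  fun i => if (∃ h', x ∈ cubeSet h' ∧ closedBy f h' ∧ h' i = some (x i)) then some (x i) else none

lemma Hh_val {f : BN n} {x : Fin n → Bool} {i : Fin n} {b : Bool}
    (hb : Hh f x i = some b) : b = x i := by
  unfold Hh at hb
  split at hb
  · exact (Option.some.inj hb).symm
  · exact nomatch hb

lemma Hh_memx (f : BN n) (x : Fin n → Bool) : x ∈ cubeSet (Hh f x) :=
  fun _ b hb => (Hh_val hb).symm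

lemma Hh_small {f : BN n} {x : Fin n → Bool} {h' : Fin n → Option Bool}
    (hx' : x ∈ cubeSet h') (hcl' : closedBy f h') :
    ∀ i b, h' i = some b → Hh f x i = some b := by
  intro i b hb
  have hbx : b = x i := (hx' i b hb).symm
  subst hbx
  unfold Hh
  rw [if_pos ⟨h', hx', hcl', hb⟩]

lemma Hh_closed (f : BN n) (x : Fin n → Bool) : closedBy f (Hh f x) := by
  intro w hw i b hb
  have hbx : b = x i := Hh_val hb
  subst hbx
  have hex : ∃ h', x ∈ cubeSet h' ∧ closedBy f h' ∧ h' i = some (x i) := by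
    unfold Hh at hb
    by_contra hc
    rw [if_neg hc] at hb
    exact nomatch hb
  obtain ⟨h', hx', hcl', hi'⟩ := hex
  have hw' : w ∈ cubeSet h' := fun k c hkc => hw k c (Hh_small hx' hcl' k c hkc)
  exact hcl' w hw' i (x i) hi'

lemma multi (f : BN n) (s0 t : Fin n → PState)
    (hstep : ∀ u : Fin n → PState, (∀ j, u j = s0 j ∨ u j = t j) → ∀ i, u i ≠ t i →
      mpStep f u (Function.update u i (t i))) :
    mpReachP f s0 t := by
  suffices h : ∀ k (u : Fin n → PState), (∀ j, u j = s0 j ∨ u j = t j) →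
      (Finset.univ.filter (fun i => u i ≠ t i)).card ≤ k → mpReachP f u t by
    exact h (Finset.univ.filter (fun i => s0 i ≠ t i)).card s0 (fun _ => Or.inl rfl) le_rfl
  intro k
  induction k with
  | zero =>
    intro u hu hc
    have hut : u = t := by
      funext i
      by_contra hne
      have hm : i ∈ Finset.univ.filter (fun i => u i ≠ t i) := by simp [hne]
      have := Finset.card_pos.mpr ⟨i, hm⟩
      omega
    rw [hut]
    exact Relation.ReflTransGen.refl
  | succ k ih =>
    intro u hu hc
    by_cases hut : u = t
    · rw [hut]
      exact Relation.ReflTransGen.refl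
    · have hex : ∃ i, u i ≠ t i := by
        by_contra hno
        push_neg at hno
        exact hut (funext hno)
      obtain ⟨i, hi⟩ := hex
      refine Relation.ReflTransGen.head (hstep u hu i hi) (ih (Function.update u i (t i)) ?_ ?_)
      · intro j
        by_cases hj : j = i
        · subst hj; simp
        · rw [Function.update_of_ne hj]; exact hu j
      · have hsub : Finset.univ.filter (fun j => Function.update u i (t i) j ≠ t j) ⊆
            (Finset.univ.filter (fun j => u j ≠ t j)).erase i := by
          intro j hj
          simp only [Finset.mem_filter, Finset.mem_univ, true_and] at hj
          have hji : j ≠ i := by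
            rintro rfl
            rw [Function.update_self] at hj
            exact hj rfl
          rw [Function.update_of_ne hji] at hj
          simp [Finset.mem_erase, hji, hj]
        have hmem : i ∈ Finset.univ.filter (fun j => u j ≠ t j) := by simp [hi]
        have h1 := Finset.card_le_card hsub
        rw [Finset.card_erase_of_mem hmem] at h1
        have h2 := Finset.card_pos.mpr ⟨i, hmem⟩
        omega

lemma sat_exists (f : BN n) (x : Fin n → Bool) :
    ∃ s, mpReachP f (embed x) s ∧
      (∀ i, s i = PState.ofBool (x i) ∨ s i = PState.up ∨ s i = PState.down) ∧
      (∀ i, ¬(s i = PState.up ∨ s i = PState.down) → ∀ w ∈ gamma s, f w i = x i) := by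
  suffices h : ∀ k (s : Fin n → PState), mpReachP f (embed x) s →
      (∀ i, s i = PState.ofBool (x i) ∨ s i = PState.up ∨ s i = PState.down) →
      (Finset.univ.filter (fun i => ¬(s i = PState.up ∨ s i = PState.down))).card ≤ k →
      ∃ t, mpReachP f (embed x) t ∧
        (∀ i, t i = PState.ofBool (x i) ∨ t i = PState.up ∨ t i = PState.down) ∧
        (∀ i, ¬(t i = PState.up ∨ t i = PState.down) → ∀ w ∈ gamma t, f w i = x i) by
    exact h _ (embed x) Relation.ReflTransGen.refl (fun _ => Or.inl rfl) le_rfl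
  intro k
  induction k with
  | zero =>
    intro s hr hshape hc
    refine ⟨s, hr, hshape, ?_⟩
    intro i hi
    exfalso
    have hm : i ∈ Finset.univ.filter (fun i => ¬(s i = PState.up ∨ s i = PState.down)) := by
      simp only [Finset.mem_filter, Finset.mem_univ, true_and]
      exact hi
    have := Finset.card_pos.mpr ⟨i, hm⟩
    omega
  | succ k ih =>
    intro s hr hshape hc
    by_cases hsat : ∀ i, ¬(s i = PState.up ∨ s i = PState.down) → ∀ w ∈ gamma s, f w i = x i
    · exact ⟨s, hr, hshape, hsat⟩
    · push_neg at hsat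
      obtain ⟨i, hi0, w, hw, hfw⟩ := hsat
      have hi : ¬(s i = PState.up ∨ s i = PState.down) := by
        rintro (h | h)
        · exact hi0.1 h
        · exact hi0.2 h
      have hsi : s i = PState.ofBool (x i) := by
        rcases hshape i with h | h | h
        · exact h
        · exact absurd (Or.inl h) hi
        · exact absurd (Or.inr h) hi
      have hfw' : f w i = !(x i) := bool_ne_iff.mp hfw
      have hstep : mpStep f s (Function.update s i (if x i = true then PState.down else PState.up)) := by
        refine ⟨i, ?_, ?_, ?_⟩
        · rw [Function.update_self, hsi]
          cases hxi : x i <;> simp [PState.ofBool]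
        · intro j hj; rw [Function.update_of_ne hj]
        · cases hxi : x i with
          | true =>
            refine Or.inr (Or.inr (Or.inl ⟨?_, ?_, w, hw, ?_⟩))
            · rw [Function.update_self]; simp
            · rw [hsi, hxi]; simp [PState.ofBool]
            · rw [hfw', hxi]; rfl
          | false =>
            refine Or.inl ⟨?_, ?_, w, hw, ?_⟩
            · rw [Function.update_self]; simp
            · rw [hsi, hxi]; simp [PState.ofBool]
            · rw [hfw', hxi]; rfl
      apply ih (Function.update s i (if x i = true then PState.down else PState.up)) (hr.tail hstep)
      · intro j
        by_cases hj : j = i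
        · rw [hj, Function.update_self]
          cases x i <;> simp
        · rw [Function.update_of_ne hj]; exact hshape j
      · have hsub : (Finset.univ.filter (fun j =>
            ¬(Function.update s i (if x i = true then PState.down else PState.up) j = PState.up ∨
              Function.update s i (if x i = true then PState.down else PState.up) j = PState.down))) ⊆
            (Finset.univ.filter (fun j => ¬(s j = PState.up ∨ s j = PState.down))).erase i := by
          intro j hj
          simp only [Finset.mem_filter, Finset.mem_univ, true_and] at hj
          have hji : j ≠ i := by
            rintro rfl
            rw [Function.update_self] at hj
            cases x j <;> simp at hj
          rw [Function.update_of_ne hji] at hj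
          simp only [Finset.mem_erase, Finset.mem_filter, Finset.mem_univ, true_and]
          exact ⟨hji, hj⟩
        have hmem : i ∈ Finset.univ.filter (fun j => ¬(s j = PState.up ∨ s j = PState.down)) := by
          simp only [Finset.mem_filter, Finset.mem_univ, true_and]
          exact hi
        have h1 := Finset.card_le_card hsub
        rw [Finset.card_erase_of_mem hmem] at h1
        have h2 := Finset.card_pos.mpr ⟨i, hmem⟩
        omega

lemma cube_sub (f : BN n) (A : Set (Fin n → Bool)) (hA : ∀ a ∈ A, mpReach f a = A)
    (x : Fin n → Bool) (hx : x ∈ A) : cubeSet (Hh f x) ⊆ A := by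
  intro z hz
  obtain ⟨s, hreach, hshape, hsat⟩ := sat_exists f x
  have hresolve : ∀ i, ¬(s i = PState.up ∨ s i = PState.down) → s i = PState.ofBool (x i) := by
    intro i hi
    rcases hshape i with h | h | h
    · exact h
    · exact absurd (Or.inl h) hi
    · exact absurd (Or.inr h) hi
  have hgam : ∀ w : Fin n → Bool,
      (∀ i, ¬(s i = PState.up ∨ s i = PState.down) → w i = x i) → w ∈ gamma s := by
    intro w hwc i v hiv
    have hni : ¬(s i = PState.up ∨ s i = PState.down) := by
      rintro (h | h) <;> rw [h] at hiv
      · exact ofBool_ne_up v hiv.symm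
      · exact ofBool_ne_down v hiv.symm
    have hsi := hresolve i hni
    have hv : v = x i := ofBool_inj (hiv.symm.trans hsi)
    rw [hv]
    exact hwc i hni
  have hxg : x ∈ gamma s := hgam x (fun _ _ => rfl)
  -- the saturated trap space h2
  have hx2 : x ∈ cubeSet (fun j => if s j = PState.up ∨ s j = PState.down then none
      else some (x j)) := by
    intro i b hb
    dsimp only at hb
    by_cases hni : s i = PState.up ∨ s i = PState.down
    · rw [if_pos hni] at hb; exact nomatch hb
    · rw [if_neg hni] at hb; exact Option.some.inj hb
  have hsub2 : ∀ w : Fin n → Bool, w ∈ cubeSet (fun j =>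
      if s j = PState.up ∨ s j = PState.down then none else some (x j)) → w ∈ gamma s := by
    intro w hw
    apply hgam
    intro i hni
    exact hw i (x i) (by dsimp only; rw [if_neg hni])
  have hcl2 : closedBy f (fun j => if s j = PState.up ∨ s j = PState.down then none
      else some (x j)) := by
    intro w hw i b hb
    dsimp only at hb
    by_cases hni : s i = PState.up ∨ s i = PState.down
    · rw [if_pos hni] at hb; exact nomatch hb
    · rw [if_neg hni] at hb
      rw [← Option.some.inj hb]
      exact hsat i hni w (hsub2 w hw)
  have hzx : ∀ i, ¬(s i = PState.up ∨ s i = PState.down) → z i = x i := by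
    intro i hni
    exact hz i (x i) (Hh_small hx2 hcl2 i (x i) (if_neg hni))
  -- the witness lemma
  have hwit : ∀ i, (s i = PState.up ∨ s i = PState.down) → ∃ w ∈ gamma s, f w i = z i := by
    intro i hfree
    by_contra hc
    push_neg at hc
    have hc' : ∀ w ∈ gamma s, f w i = !(z i) := fun w hw => bool_ne_iff.mp (hc w hw)
    by_cases hzi : z i = x i
    · -- stuck toward the value x could always take: contradicts attractor property
      have hfx : f x i = !(x i) := by rw [← hzi]; exact hc' x hxg
      have hxg0 : x ∈ gamma (embed x) := fun j v hv => ofBool_inj hv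
      have hstep1 : mpStep f (embed x)
          (Function.update (embed x) i (if x i = true then PState.down else PState.up)) := by
        refine ⟨i, ?_, ?_, ?_⟩
        · rw [Function.update_self]
          cases hxi : x i <;> simp [embed, hxi, PState.ofBool]
        · intro j hj; rw [Function.update_of_ne hj]
        · cases hxi : x i with
          | true =>
            refine Or.inr (Or.inr (Or.inl ⟨?_, ?_, x, hxg0, ?_⟩))
            · rw [Function.update_self]; simp
            · show embed x i ≠ PState.zero
              simp [embed, hxi, PState.ofBool]
            · rw [hfx, hxi]; rfl
          | false =>
            refine Or.inl ⟨?_, ?_, x, hxg0, ?_⟩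
            · rw [Function.update_self]; simp
            · show embed x i ≠ PState.one
              simp [embed, hxi, PState.ofBool]
            · rw [hfx, hxi]; rfl
      have hstep2 : mpStep f
          (Function.update (embed x) i (if x i = true then PState.down else PState.up))
          (embed (Function.update x i (!(x i)))) := by
        refine ⟨i, ?_, ?_, ?_⟩
        · rw [Function.update_self]
          show _ ≠ embed _ i
          simp only [embed, Function.update_self]
          cases hxi : x i <;> simp [hxi, PState.ofBool]
        · intro j hj
          rw [Function.update_of_ne hj]
          show embed x j = embed _ j
          simp only [embed, Function.update_of_ne hj]
        · cases hxi : x i with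
          | true =>
            refine Or.inr (Or.inr (Or.inr ⟨?_, ?_⟩))
            · show embed _ i = PState.zero
              simp [embed, Function.update_self, hxi, PState.ofBool]
            · rw [Function.update_self]; simp
          | false =>
            refine Or.inr (Or.inl ⟨?_, ?_⟩)
            · show embed _ i = PState.one
              simp [embed, Function.update_self, hxi, PState.ofBool]
            · rw [Function.update_self]; simp
      have hx'A : Function.update x i (!(x i)) ∈ A := by
        rw [← hA x hx]
        exact Relation.ReflTransGen.head hstep1 (Relation.ReflTransGen.single hstep2)
      -- trap space fixing i to !(x i), contains x'
      have hx'3 : Function.update x i (!(x i)) ∈ cubeSet (fun j => if j = i then some (!(x i))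
          else if s j = PState.up ∨ s j = PState.down then none else some (x j)) := by
        intro j b hb
        dsimp only at hb
        by_cases hji : j = i
        · rw [if_pos hji] at hb
          rw [hji, Function.update_self]
          exact Option.some.inj hb
        · rw [if_neg hji] at hb
          rw [Function.update_of_ne hji]
          by_cases hnf : s j = PState.up ∨ s j = PState.down
          · rw [if_pos hnf] at hb; exact nomatch hb
          · rw [if_neg hnf] at hb; exact Option.some.inj hb
      have hcl3 : closedBy f (fun j => if j = i then some (!(x i))
          else if s j = PState.up ∨ s j = PState.down then none else some (x j)) := by
        intro w hw j b hb
        dsimp only at hb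
        have hwg : w ∈ gamma s := by
          apply hgam
          intro kk hnk
          have hki : kk ≠ i := by rintro rfl; exact hnk hfree
          exact hw kk (x kk) ((if_neg hki).trans (if_neg hnk))
        by_cases hji : j = i
        · rw [if_pos hji] at hb
          rw [hji, ← Option.some.inj hb, ← hzi]
          exact hc' w hwg
        · rw [if_neg hji] at hb
          by_cases hnf : s j = PState.up ∨ s j = PState.down
          · rw [if_pos hnf] at hb; exact nomatch hb
          · rw [if_neg hnf] at hb
            rw [← Option.some.inj hb]
            exact hsat j hnf w hwg
      have hx_in : x ∈ mpReach f (Function.update x i (!(x i))) := by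
        rw [hA _ hx'A]; exact hx
      have hinv := invariant f _ _ hx'3 hcl3 (embed x) hx_in i (!(x i)) (by simp)
      have : x i = !(x i) := ofBool_inj hinv
      simp at this
    · -- f constant x i on the whole saturated cube: i would be fixed in Hh f x
      have hzi' : z i = !(x i) := bool_ne_iff.mp hzi
      have hx4 : x ∈ cubeSet (fun j => if j = i then some (x i)
          else if s j = PState.up ∨ s j = PState.down then none else some (x j)) := by
        intro j b hb
        dsimp only at hb
        by_cases hji : j = i
        · rw [if_pos hji] at hb
          rw [hji]
          exact Option.some.inj hb
        · rw [if_neg hji] at hb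
          by_cases hnf : s j = PState.up ∨ s j = PState.down
          · rw [if_pos hnf] at hb; exact nomatch hb
          · rw [if_neg hnf] at hb; exact Option.some.inj hb
      have hcl4 : closedBy f (fun j => if j = i then some (x i)
          else if s j = PState.up ∨ s j = PState.down then none else some (x j)) := by
        intro w hw j b hb
        dsimp only at hb
        have hwg : w ∈ gamma s := by
          apply hgam
          intro kk hnk
          have hki : kk ≠ i := by rintro rfl; exact hnk hfree
          exact hw kk (x kk) ((if_neg hki).trans (if_neg hnk))
        by_cases hji : j = i
        · rw [if_pos hji] at hb
          rw [hji, ← Option.some.inj hb]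
          have hcw := hc' w hwg
          rw [hzi'] at hcw
          simpa using hcw
        · rw [if_neg hji] at hb
          by_cases hnf : s j = PState.up ∨ s j = PState.down
          · rw [if_pos hnf] at hb; exact nomatch hb
          · rw [if_neg hnf] at hb
            rw [← Option.some.inj hb]
            exact hsat j hnf w hwg
      have hinv := invariant f _ _ hx4 hcl4 s hreach i (x i) (by simp)
      rcases hfree with h | h <;> rw [h] at hinv
      · exact ofBool_ne_up (x i) hinv.symm
      · exact ofBool_ne_down (x i) hinv.symm
  -- phase 1: flip all free coordinates to the right direction
  have hph1 : mpReachP f s (fun i => if s i = PState.up ∨ s i = PState.down then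
      (if z i = true then PState.up else PState.down) else s i) := by
    apply multi
    intro u hu i hui
    have hfree : s i = PState.up ∨ s i = PState.down := by
      by_contra hni
      rcases hu i with h | h
      · rw [if_neg hni] at hui; exact hui h
      · exact hui h
    have hus : u i = s i := (hu i).resolve_right hui
    obtain ⟨w, hw, hfw⟩ := hwit i hfree
    have hwu : w ∈ gamma u := by
      intro j v hjv
      by_cases hfj : s j = PState.up ∨ s j = PState.down
      · exfalso
        rcases hu j with h | h
        · rw [h] at hjv
          exact ofBool_ne_trans hfj hjv.symm
        · rw [h, if_pos hfj] at hjv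
          cases hzj : z j <;> rw [hzj] at hjv <;> cases v <;> simp [PState.ofBool] at hjv
      · have huj : u j = s j := by
          rcases hu j with h | h
          · exact h
          · rw [h, if_neg hfj]
        rw [huj] at hjv
        exact hw j v hjv
    refine ⟨i, ?_, ?_, ?_⟩
    · rw [Function.update_self]; exact hui
    · intro j hj; rw [Function.update_of_ne hj]
    · rw [Function.update_self, if_pos hfree]
      cases hzi : z i with
      | true =>
        refine Or.inl ⟨rfl, ?_, w, hwu, by rw [hfw, hzi]⟩
        rw [hus]
        rcases hfree with h | h <;> rw [h] <;> simp
      | false =>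
        refine Or.inr (Or.inr (Or.inl ⟨rfl, ?_, w, hwu, by rw [hfw, hzi]⟩))
        rw [hus]
        rcases hfree with h | h <;> rw [h] <;> simp
  -- phase 2: collapse all free coordinates
  have hph2 : mpReachP f (fun i => if s i = PState.up ∨ s i = PState.down then
      (if z i = true then PState.up else PState.down) else s i) (embed z) := by
    apply multi
    intro u hu i hui
    have hfree : s i = PState.up ∨ s i = PState.down := by
      by_contra hni
      have h1 : embed z i = (fun i => if s i = PState.up ∨ s i = PState.down then
          (if z i = true then PState.up else PState.down) else s i) i := by
        simp only [if_neg hni]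
        rw [hresolve i hni]
        show PState.ofBool (z i) = _
        rw [hzx i hni]
      rcases hu i with h | h
      · exact hui (h.trans h1.symm)
      · exact hui h
    have hus : u i = (if z i = true then PState.up else PState.down) := by
      rcases hu i with h | h
      · rw [h, if_pos hfree]
      · exact absurd h hui
    refine ⟨i, ?_, ?_, ?_⟩
    · rw [Function.update_self]; exact hui
    · intro j hj; rw [Function.update_of_ne hj]
    · rw [Function.update_self]
      cases hzi : z i with
      | true =>
        refine Or.inr (Or.inl ⟨?_, ?_⟩)
        · show embed z i = PState.one
          simp [embed, hzi, PState.ofBool]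
        · rw [hus, hzi]; rfl
      | false =>
        refine Or.inr (Or.inr (Or.inr ⟨?_, ?_⟩))
        · show embed z i = PState.zero
          simp [embed, hzi, PState.ofBool]
        · rw [hus, hzi]; rfl
  have hfin : mpReachP f (embed x) (embed z) := (hreach.trans hph1).trans hph2
  rw [← hA x hx]
  exact hfin

end Aux

theorem stmt11 {n : ℕ} (f : BN n) (A : Set (Fin n → Bool))
    (hne : A.Nonempty) (hA : ∀ a ∈ A, mpReach f a = A)
    (x y : Fin n → Bool) (hx : x ∈ A) (hy : y ∈ A) :
    (∀ z : Fin n → Bool, (∀ i, x i = y i → z i = x i) → z ∈ A) ∧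
    ∃ h : Fin n → Option Bool, cubeSet h = A := by
  classical
  have hAeq : A = cubeSet (Hh f x) := by
    apply Set.Subset.antisymm
    · intro a ha
      have hra : a ∈ mpReach f x := by rw [hA x hx]; exact ha
      intro i b hib
      exact ofBool_inj (invariant f (Hh f x) x (Hh_memx f x) (Hh_closed f x) (embed a) hra i b hib)
    · exact cube_sub f A hA x hx
  constructor
  · intro z hzxy
    rw [hAeq]
    intro i b hib
    have hbx : b = x i := Hh_val hib
    have hyc : y ∈ cubeSet (Hh f x) := by rw [← hAeq]; exact hy
    have hyi : y i = b := hyc i b hib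
    rw [hbx]
    exact hzxy i (by rw [hbx] at hyi; exact hyi.symm)
  · exact ⟨Hh f x, hAeq.symm⟩
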